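/- If G and H are connected graphs with γ(G) ≠ 1 and γ(H) ≠ 1, then the outer-connected domination number of the lexicographic product G ∘ H equals the total domination number of G, i.e., γ̃c(G ∘ H) = γ_t(G). -/

import Mathlib

open SimpleGraph

/-- `S` is a dominating set of `G`. -/
def IsDomSet {α : Type*} (G : SimpleGraph α) (S : Set α) : Prop :=
  ∀ v, v ∉ S → ∃ u ∈ S, G.Adj u v

/-- `S` is an outer-connected dominating set of `G`: it dominates `G` and the
subgraph induced on the complement of `S` is connected. -/
def IsOCDomSet {α : Type*} (G : SimpleGraph α) (S : Set α) : Prop :=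
  IsDomSet G S ∧ (G.induce (Sᶜ : Set α)).Connected

/-- `S` is a total dominating set of `G`. -/
def IsTotalDomSet {α : Type*} (G : SimpleGraph α) (S : Set α) : Prop :=
  ∀ v, ∃ u ∈ S, G.Adj u v

/-- The domination number `γ(G)`. -/
noncomputable def domNum {α : Type*} (G : SimpleGraph α) : ℕ :=
  sInf {n | ∃ S : Set α, IsDomSet G S ∧ S.ncard = n}

/-- The outer-connected domination number `γ̃c(G)`. -/
noncomputable def ocDomNum {α : Type*} (G : SimpleGraph α) : ℕ :=
  sInf {n | ∃ S : Set α, IsOCDomSet G S ∧ S.ncard = n}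

/-- The total domination number `γ_t(G)`. -/
noncomputable def totalDomNum {α : Type*} (G : SimpleGraph α) : ℕ :=
  sInf {n | ∃ S : Set α, IsTotalDomSet G S ∧ S.ncard = n}

/-- The minimum degree `δ(G)`. -/
noncomputable def minDeg {α : Type*} (G : SimpleGraph α) : ℕ :=
  sInf {d | ∃ v, (G.neighborSet v).ncard = d}

/-- The lexicographic product `G ∘ H`. -/
def lexProd {α β : Type*} (G : SimpleGraph α) (H : SimpleGraph β) :
    SimpleGraph (α × β) where
  Adj x y := G.Adj x.1 y.1 ∨ (x.1 = y.1 ∧ H.Adj x.2 y.2)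
  symm := by
    constructor
    rintro x y (h | ⟨h1, h2⟩)
    · exact Or.inl h.symm
    · exact Or.inr ⟨h1.symm, h2.symm⟩
  loopless := by
    constructor
    rintro x (h | ⟨_, h⟩)
    · exact G.irrefl h
    · exact H.irrefl h

/-- The corona product `G ∘c H`: one copy of `G` and, for each vertex `x` of `G`,
a copy of `H` whose vertices are all joined to `x`. -/
def corona {α β : Type*} (G : SimpleGraph α) (H : SimpleGraph β) :
    SimpleGraph (α ⊕ α × β) where
  Adj x y :=
    match x, y with
    | Sum.inl a, Sum.inl b => G.Adj a b
    | Sum.inl a, Sum.inr (b, _) => a = b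
    | Sum.inr (a, _), Sum.inl b => a = b
    | Sum.inr (a, u), Sum.inr (b, v) => a = b ∧ H.Adj u v
  symm := by
    constructor
    rintro (a | ⟨a, u⟩) (b | ⟨b, v⟩) h
    · exact h.symm
    · exact h.symm
    · exact h.symm
    · exact ⟨h.1.symm, h.2.symm⟩
  loopless := by
    constructor
    rintro (a | ⟨a, u⟩) h
    · exact G.irrefl h
    · exact H.irrefl h.2

/-- The direct (tensor) product of the complete graphs `K_{n 0}, …, K_{n (t-1)}`:
two `t`-tuples are adjacent iff they differ in every coordinate. -/
def directProdComplete (t : ℕ) (n : Fin t → ℕ) :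
    SimpleGraph (∀ i : Fin t, Fin (n i)) where
  Adj x y := x ≠ y ∧ ∀ i, x i ≠ y i
  symm := by
    constructor
    rintro x y ⟨h1, h2⟩
    exact ⟨h1.symm, fun i => (h2 i).symm⟩
  loopless := ⟨fun x h => h.1 rfl⟩

/-!
A dominating set `S` of `G ∘ H` projects to a set `D` of vertices of `G`. A vertex `v` of `G` with
no neighbour in `D` must be dominated inside its own copy of `H`, so the fibre of `S` over `v`
dominates `H` and, as `γ(H) ≥ 2`, has two points; redirecting one of them to a neighbour of `v`
turns the projection of `S` into a total dominating set of `G` of size at most `|S|`. Hence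
`γ_t(G) ≤ γ̃c(G ∘ H)`. Conversely, for a minimum total dominating set `T` of `G`, the set
`T × {b₀}` dominates `G ∘ H`, and its complement contains the copy `G × {b₁}` of the connected
graph `G`, to which every vertex of the complement is adjacent.
-/

section Domination

variable {α : Type*} {G : SimpleGraph α} {S : Set α}

theorem IsDomSet.univ (G : SimpleGraph α) : IsDomSet G Set.univ :=
  fun v hv => absurd (Set.mem_univ v) hv

theorem IsDomSet.domNum_le (hS : IsDomSet G S) : domNum G ≤ S.ncard :=
  Nat.sInf_le ⟨S, hS, rfl⟩

theorem exists_isDomSet_ncard_eq_domNum (G : SimpleGraph α) :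
    ∃ S, IsDomSet G S ∧ S.ncard = domNum G :=
  Nat.sInf_mem (s := {n | ∃ S, IsDomSet G S ∧ S.ncard = n}) ⟨_, _, IsDomSet.univ G, rfl⟩

theorem domNum_le_card (G : SimpleGraph α) : domNum G ≤ Nat.card α := by
  simpa using (IsDomSet.univ G).domNum_le

theorem domNum_pos [Finite α] [Nonempty α] (G : SimpleGraph α) : 0 < domNum G := by
  obtain ⟨S, hS, hcard⟩ := exists_isDomSet_ncard_eq_domNum G
  refine Nat.pos_of_ne_zero fun h => ?_
  obtain rfl : S = ∅ := (Set.ncard_eq_zero S.toFinite).mp (hcard.trans h)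
  obtain ⟨u, hu, -⟩ := hS (Classical.arbitrary α) (Set.notMem_empty _)
  exact hu

theorem one_lt_domNum [Finite α] [Nonempty α] (h : domNum G ≠ 1) : 1 < domNum G := by
  have := domNum_pos G
  omega

theorem nontrivial_of_domNum_ne_one [Finite α] [Nonempty α] (h : domNum G ≠ 1) :
    Nontrivial α :=
  Finite.one_lt_card_iff_nontrivial.mp ((one_lt_domNum h).trans_le (domNum_le_card G))

theorem IsTotalDomSet.totalDomNum_le (hS : IsTotalDomSet G S) : totalDomNum G ≤ S.ncard :=
  Nat.sInf_le ⟨S, hS, rfl⟩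

theorem exists_isTotalDomSet_ncard_eq_totalDomNum (hG : ∀ v, ∃ u, G.Adj v u) :
    ∃ S, IsTotalDomSet G S ∧ S.ncard = totalDomNum G := by
  refine Nat.sInf_mem (s := {n | ∃ S, IsTotalDomSet G S ∧ S.ncard = n})
    ⟨_, Set.univ, fun v => ?_, rfl⟩
  obtain ⟨u, hu⟩ := hG v
  exact ⟨u, Set.mem_univ u, hu.symm⟩

theorem IsOCDomSet.ocDomNum_le (hS : IsOCDomSet G S) : ocDomNum G ≤ S.ncard :=
  Nat.sInf_le ⟨S, hS, rfl⟩

theorem IsOCDomSet.exists_ncard_eq_ocDomNum (hS : IsOCDomSet G S) :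
    ∃ S', IsOCDomSet G S' ∧ S'.ncard = ocDomNum G :=
  Nat.sInf_mem (s := {n | ∃ S, IsOCDomSet G S ∧ S.ncard = n}) ⟨_, S, hS, rfl⟩

end Domination

section LexProd

variable {α β : Type*} {G : SimpleGraph α} {H : SimpleGraph β}

theorem isDomSet_fiber_of_isDomSet_lexProd {S : Set (α × β)} (hS : IsDomSet (lexProd G H) S)
    {v : α} (hv : ∀ u ∈ Prod.fst '' S, ¬ G.Adj u v) : IsDomSet H {b | (v, b) ∈ S} := by
  intro b hb
  obtain ⟨⟨u, b'⟩, hu, hadj | ⟨rfl, hadj⟩⟩ := hS (v, b) hb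
  · exact absurd hadj (hv u ⟨_, hu, rfl⟩)
  · exact ⟨b', hu, hadj⟩

theorem exists_isTotalDomSet_ncard_le_of_isDomSet_lexProd [Finite α] [Finite β]
    (hG : ∀ v, ∃ u, G.Adj v u) (hH : ∀ B, IsDomSet H B → 2 ≤ B.ncard)
    {S : Set (α × β)} (hS : IsDomSet (lexProd G H) S) :
    ∃ T, IsTotalDomSet G T ∧ T.ncard ≤ S.ncard := by
  classical
  choose N hN using hG
  set W : Set α := {v | ∀ u ∈ Prod.fst '' S, ¬ G.Adj u v}
  have two_le_fiber : ∀ v ∈ W, 2 ≤ {b | (v, b) ∈ S}.ncard := fun v hv =>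
    hH _ (isDomSet_fiber_of_isDomSet_lexProd hS hv)
  have fiber_nonempty : ∀ v ∈ W, {b | (v, b) ∈ S}.Nonempty := fun v hv =>
    Set.nonempty_of_ncard_ne_zero (by have := two_le_fiber v hv; omega)
  choose c hc using fiber_nonempty
  -- Over each `v ∈ W` the point `(v, c v)` is sent to the neighbour `N v`; the fibre over `v`
  -- has another point, which still covers `v` itself.
  let φ : α × β → α := fun p => if h : p.1 ∈ W then if p.2 = c p.1 h then N p.1 else p.1 else p.1
  have fst_subset : Prod.fst '' S ⊆ φ '' S := by
    rintro _ ⟨⟨v, b⟩, hvb, rfl⟩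
    by_cases hv : v ∈ W
    · obtain ⟨b', hb', hne⟩ := Set.exists_ne_of_one_lt_ncard (two_le_fiber v hv) (c v hv)
      exact ⟨(v, b'), hb', by simp [φ, hv, hne]⟩
    · exact ⟨(v, b), hvb, by simp [φ, hv]⟩
  refine ⟨φ '' S, fun v => ?_, Set.ncard_image_le⟩
  by_cases hv : v ∈ W
  · exact ⟨N v, ⟨(v, c v hv), hc v hv, by simp [φ, hv]⟩, (hN v).symm⟩
  · simp only [W, Set.mem_ofPred_eq, not_forall, not_not] at hv
    obtain ⟨u, hu, hadj⟩ := hv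
    exact ⟨u, fst_subset hu, hadj⟩

theorem totalDomNum_le_ocDomNum_lexProd [Finite α] [Finite β]
    (hG : ∀ v, ∃ u, G.Adj v u) (hH : ∀ B, IsDomSet H B → 2 ≤ B.ncard)
    {S₀ : Set (α × β)} (hS₀ : IsOCDomSet (lexProd G H) S₀) :
    totalDomNum G ≤ ocDomNum (lexProd G H) := by
  obtain ⟨S, hS, hcard⟩ := hS₀.exists_ncard_eq_ocDomNum
  obtain ⟨T, hT, hTS⟩ := exists_isTotalDomSet_ncard_le_of_isDomSet_lexProd hG hH hS.1
  exact hT.totalDomNum_le.trans (hTS.trans hcard.le)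

theorem IsTotalDomSet.isOCDomSet_lexProd (hG : G.Connected) {T : Set α} (hT : IsTotalDomSet G T)
    {b₀ b₁ : β} (hb : b₀ ≠ b₁) : IsOCDomSet (lexProd G H) (T ×ˢ {b₀}) := by
  set C : Set (α × β) := (T ×ˢ {b₀})ᶜ
  set K := (lexProd G H).induce C
  have layer_mem : ∀ a, (a, b₁) ∈ C := by simp [C, hb.symm]
  let layer : G →g K := ⟨fun a => ⟨(a, b₁), layer_mem a⟩, Or.inl⟩
  have reach_layer : ∀ x : C, ∃ a, K.Reachable x (layer a) := fun x => by
    obtain ⟨u, -, hu⟩ := hT x.1.1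
    exact ⟨u, (show K.Adj x (layer u) from Or.inl hu.symm).reachable⟩
  refine ⟨fun ⟨v, b⟩ _ => ?_, ?_⟩
  · obtain ⟨u, hu, hadj⟩ := hT v
    exact ⟨(u, b₀), ⟨hu, rfl⟩, Or.inl hadj⟩
  · have : Nonempty C := ⟨layer hG.nonempty.some⟩
    refine ⟨fun x y => ?_⟩
    obtain ⟨a, hxa⟩ := reach_layer x
    obtain ⟨a', hya'⟩ := reach_layer y
    exact hxa.trans (((hG.preconnected a a').map layer).trans hya'.symm)

end LexProd

/-- If `G` and `H` are connected with `γ(G) ≠ 1` and `γ(H) ≠ 1`, then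
`γ̃c(G ∘ H) = γ_t(G)`. -/
theorem stmt_7 {α β : Type*} [Fintype α] [Fintype β]
    (G : SimpleGraph α) (H : SimpleGraph β)
    (hG : G.Connected) (hH : H.Connected)
    (h1 : domNum G ≠ 1) (h2 : domNum H ≠ 1) :
    ocDomNum (lexProd G H) = totalDomNum G := by
  have := hG.nonempty
  have := hH.nonempty
  have := nontrivial_of_domNum_ne_one h1
  have hGadj : ∀ v, ∃ u, G.Adj v u := hG.preconnected.exists_adj_of_nontrivial
  have hH2 : ∀ B, IsDomSet H B → 2 ≤ B.ncard := fun B hB =>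
    (one_lt_domNum h2).trans_le hB.domNum_le
  obtain ⟨b₀, b₁, hb⟩ := (nontrivial_of_domNum_ne_one h2).exists_pair_ne
  obtain ⟨T, hT, hTcard⟩ := exists_isTotalDomSet_ncard_eq_totalDomNum hGadj
  have hOC : IsOCDomSet (lexProd G H) (T ×ˢ {b₀}) := hT.isOCDomSet_lexProd hG hb
  refine le_antisymm ?_ (totalDomNum_le_ocDomNum_lexProd hGadj hH2 hOC)
  calc ocDomNum (lexProd G H) ≤ (T ×ˢ {b₀}).ncard := hOC.ocDomNum_le
    _ = totalDomNum G := by rw [Set.ncard_prod, Set.ncard_singleton, mul_one, hTcard]
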